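/- Let 1 < p < ∞, ε > 0, and let M be a nonzero nonnegative tensor in ℂ^d ⊗ ⋯ ⊗ ℂ^d ((n+1) factors) with K := ‖M‖_{ℓ₁}. Then there exist k ∈ ℕ and vectors v_i^{[j]} ∈ ℝ^d with nonnegative entries such that each elementary tensor v_i^{[0]}⊗⋯⊗v_i^{[n]} has ℓ_p-norm at most 1 and N = (K/k)·∑_{i=1}^k v_i^{[0]}⊗⋯⊗v_i^{[n]} satisfies ‖M − N‖_{ℓ_p} ≤ ε, where k ≤ ⌈C_p · (2K/ε)^{p/(p−1)}⌉ if 1 < p ≤ 2 and k ≤ ⌈D_p · (2K/ε)²⌉ if 2 ≤ p < ∞. In particular N is nonnegative with nonnegative tensor rank at most k, independent of the dimension d. -/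

import Mathlib

open scoped ComplexOrder

/-- The constant `C_p = (2 e² / p^{1/p})^{p/(p-1)}`. -/
noncomputable def Cp (p : ℝ) : ℝ := (2 * Real.exp 2 / p ^ (1/p)) ^ (p / (p - 1))

/-- The constant `D_p = 2 (p-1) e⁴`. -/
noncomputable def Dp (p : ℝ) : ℝ := 2 * (p - 1) * Real.exp 4

/-- The elementary tensor product of a family of real vectors, viewed as a complex tensor. -/
noncomputable def tvec {n d : ℕ} (v : Fin (n+1) → Fin d → ℝ) :
    (Fin (n+1) → Fin d) → ℂ :=
  fun x => ∏ j, ((v j (x j) : ℝ) : ℂ)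

/-- The `ℓ_p`-norm of a tensor in `ℂ^d ⊗ ⋯ ⊗ ℂ^d` ((n+1) factors). -/
noncomputable def lpNormT {n d : ℕ} (p : ℝ) (M : (Fin (n+1) → Fin d) → ℂ) : ℝ :=
  (∑ x, ‖M x‖ ^ p) ^ (1 / p)

/-! ### Auxiliary lemmas -/

lemma rpow_le_mul_of_le' {p t a b : ℝ} (hp : 1 < p) (ht : 0 < t)
    (ha : 0 ≤ a) (hab : a ≤ b) (hbt : b ≤ t) : a ^ p ≤ t ^ (p-1) * b := by
  rcases eq_or_lt_of_le ha with h | h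
  · rw [← h, Real.zero_rpow (by positivity)]
    have : 0 ≤ b := le_trans ha hab
    positivity
  · calc a ^ p = a ^ (p-1) * a := by
          rw [← Real.rpow_add_one (ne_of_gt h), sub_add_cancel]
      _ ≤ t ^ (p-1) * b := by
          apply mul_le_mul _ hab ha (by positivity)
          exact Real.rpow_le_rpow ha (le_trans hab hbt) (by linarith)

/-- `ℓ_p ≤ ℓ_1` for nonnegative families. -/
lemma lp_le_l1' {ι : Type*} [Fintype ι] {p : ℝ} (hp : 1 < p) (a : ι → ℝ)
    (h0 : ∀ x, 0 ≤ a x) : (∑ x, a x ^ p) ^ (1/p) ≤ ∑ x, a x := by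
  have hp0 : (0:ℝ) < p := lt_trans one_pos hp
  have hS0 : 0 ≤ ∑ x, a x := Finset.sum_nonneg fun x _ => h0 x
  rcases eq_or_lt_of_le hS0 with h | h
  · have hz : ∀ x ∈ Finset.univ, a x = 0 :=
      fun x _ => le_antisymm (by
        have := (Finset.sum_eq_zero_iff_of_nonneg (fun y _ => h0 y)).mp h.symm
        exact le_of_eq (this x (Finset.mem_univ x))) (h0 x)
    rw [Finset.sum_congr rfl (fun x _ => by rw [hz x (Finset.mem_univ x), Real.zero_rpow hp0.ne']),
      Finset.sum_const, smul_zero, Real.zero_rpow (by positivity), ← h]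
  · set S := ∑ x, a x with hS_def
    have h1 : ∑ x, a x ^ p ≤ S ^ p := by
      calc ∑ x, a x ^ p ≤ ∑ x, S ^ (p-1) * a x := by
            apply Finset.sum_le_sum
            intro x _
            exact rpow_le_mul_of_le' hp h (h0 x) (le_refl _)
              (Finset.single_le_sum (fun y _ => h0 y) (Finset.mem_univ x))
        _ = S ^ (p-1) * S := by rw [← Finset.mul_sum]
        _ = S ^ p := by rw [← Real.rpow_add_one (ne_of_gt h), sub_add_cancel]
    calc (∑ x, a x ^ p) ^ (1/p) ≤ (S ^ p) ^ (1/p) := by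
          apply Real.rpow_le_rpow _ h1 (by positivity)
          exact Finset.sum_nonneg fun x _ => Real.rpow_nonneg (h0 x) p
      _ = S := by rw [one_div, Real.rpow_rpow_inv h.le hp0.ne']

/-- The main analytic estimate. -/
lemma lp_estimate' {ι : Type*} [Fintype ι] {p ε K : ℝ} (hp : 1 < p) (hε : 0 < ε)
    (hεK : ε < K) {k : ℕ} (hk : (2*K/ε) ^ (p/(p-1)) ≤ (k:ℝ))
    (δ m : ι → ℝ) (hδ0 : ∀ x, 0 ≤ δ x) (hδm : ∀ x, δ x ≤ m x)
    (hδk : ∀ x, δ x ≤ K / k) (hmK : ∑ x, m x ≤ K) :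
    (∑ x, δ x ^ p) ^ (1/p) ≤ ε := by
  have hp0 : (0:ℝ) < p := lt_trans one_pos hp
  have hp1 : (0:ℝ) < p - 1 := by linarith
  have hK : 0 < K := hε.trans hεK
  have hB : (0:ℝ) < 2*K/ε := by positivity
  have hk0 : (0:ℝ) < k := lt_of_lt_of_le (Real.rpow_pos_of_pos hB _) hk
  have hm0 : ∀ x, 0 ≤ m x := fun x => le_trans (hδ0 x) (hδm x)
  set B := 2*K/ε with hB_def
  set q := p/(p-1) with hq_def
  set t := ε * B ^ (-(p-1)⁻¹) with ht_def
  have ht0 : 0 < t := by positivity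
  have htp : t ^ (p-1) = ε ^ p / (2*K) := by
    rw [ht_def, Real.mul_rpow hε.le (by positivity), ← Real.rpow_mul hB.le,
      show -(p-1)⁻¹ * (p-1) = -1 by field_simp, Real.rpow_neg_one, hB_def]
    rw [show ((2:ℝ)*K/ε)⁻¹ = ε / (2*K) by rw [inv_div]]
    rw [show ε^(p-1) * (ε/(2*K)) = (ε^(p-1) * ε)/(2*K) by ring,
      ← Real.rpow_add_one hε.ne', sub_add_cancel]
  set S := Finset.univ.filter (fun x => t < m x) with hS_def
  have hcard : (S.card : ℝ) * t ≤ K := by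
    calc (S.card : ℝ) * t = ∑ _x ∈ S, t := by rw [Finset.sum_const, nsmul_eq_mul]
      _ ≤ ∑ x ∈ S, m x := Finset.sum_le_sum (fun x hx => (Finset.mem_filter.mp hx).2.le)
      _ ≤ ∑ x, m x := Finset.sum_le_sum_of_subset_of_nonneg (Finset.subset_univ _)
          (fun x _ _ => hm0 x)
      _ ≤ K := hmK
  have hcard' : (S.card : ℝ) ≤ K / t := by
    rw [le_div_iff₀ ht0]; exact hcard
  have h2 : ∑ x ∈ Finset.univ.filter (fun x => ¬ t < m x), δ x ^ p ≤ ε ^ p / 2 := by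
    calc ∑ x ∈ Finset.univ.filter (fun x => ¬ t < m x), δ x ^ p
        ≤ ∑ x ∈ Finset.univ.filter (fun x => ¬ t < m x), t ^ (p-1) * m x := by
          apply Finset.sum_le_sum
          intro x hx
          have hmt : m x ≤ t := not_lt.mp (Finset.mem_filter.mp hx).2
          exact rpow_le_mul_of_le' hp ht0 (hδ0 x) (hδm x) hmt
      _ = t ^ (p-1) * ∑ x ∈ Finset.univ.filter (fun x => ¬ t < m x), m x := by
          rw [Finset.mul_sum]
      _ ≤ t ^ (p-1) * K := by
          apply mul_le_mul_of_nonneg_left _ (by positivity)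
          exact le_trans (Finset.sum_le_sum_of_subset_of_nonneg (Finset.subset_univ _)
            (fun x _ _ => hm0 x)) hmK
      _ = ε ^ p / 2 := by rw [htp]; field_simp
  have hkp : B ^ (q * p) ≤ (k:ℝ) ^ p := by
    rw [Real.rpow_mul hB.le]
    exact Real.rpow_le_rpow (by positivity) hk hp0.le
  have hmain : (K/t) * (K/(k:ℝ))^p ≤ ε ^ p / 2 := by
    rw [Real.div_rpow hK.le hk0.le]
    rw [div_mul_div_comm, div_le_div_iff₀ (by positivity) (by norm_num)]
    calc K * K ^ p * 2 ≤ 2 ^ (p+1) * K ^ (p+1) := by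
          rw [show K * K^p * 2 = 2 * (K^p * K) by ring, ← Real.rpow_add_one hK.ne']
          apply mul_le_mul_of_nonneg_right _ (by positivity)
          calc (2:ℝ) = 2 ^ (1:ℝ) := (Real.rpow_one 2).symm
            _ ≤ 2 ^ (p+1) := Real.rpow_le_rpow_of_exponent_le one_le_two (by linarith)
      _ = (2*K) ^ (p+1) := (Real.mul_rpow (by norm_num) hK.le).symm
      _ = ε ^ p * (ε * B ^ (p+1)) := by
          rw [hB_def, Real.div_rpow (by positivity) hε.le,
            show ε^p * (ε * ((2*K)^(p+1) / ε^(p+1))) = (ε^p * ε) * ((2*K)^(p+1) / ε^(p+1)) by ring,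
            ← Real.rpow_add_one hε.ne']
          field_simp
      _ = ε ^ p * (t * B ^ (q * p)) := by
          rw [ht_def, mul_assoc, ← Real.rpow_add hB,
            show -(p-1)⁻¹ + q * p = p + 1 by rw [hq_def]; field_simp; ring]
      _ ≤ ε ^ p * (t * (k:ℝ)^p) := by
          apply mul_le_mul_of_nonneg_left _ (by positivity)
          exact mul_le_mul_of_nonneg_left hkp ht0.le
  have h1 : ∑ x ∈ S, δ x ^ p ≤ ε ^ p / 2 := by
    calc ∑ x ∈ S, δ x ^ p ≤ S.card • ((K/(k:ℝ))^p) := by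
          apply Finset.sum_le_card_nsmul
          intro x _
          exact Real.rpow_le_rpow (hδ0 x) (hδk x) hp0.le
      _ = (S.card : ℝ) * (K/(k:ℝ))^p := by rw [nsmul_eq_mul]
      _ ≤ (K/t) * (K/(k:ℝ))^p := by
          apply mul_le_mul_of_nonneg_right hcard' (by positivity)
      _ ≤ ε ^ p / 2 := hmain
  have hE : ∑ x, δ x ^ p ≤ ε ^ p := by
    rw [← Finset.sum_filter_add_sum_filter_not Finset.univ (fun x => t < m x)]
    calc ∑ x ∈ S, δ x ^ p + ∑ x ∈ Finset.univ.filter (fun x => ¬ t < m x), δ x ^ p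
        ≤ ε^p/2 + ε^p/2 := add_le_add h1 h2
      _ = ε ^ p := by ring
  calc (∑ x, δ x ^ p) ^ (1/p) ≤ (ε ^ p) ^ (1/p) := by
        apply Real.rpow_le_rpow _ hE (by positivity)
        exact Finset.sum_nonneg fun x _ => Real.rpow_nonneg (hδ0 x) p
    _ = ε := by rw [one_div, Real.rpow_rpow_inv hε.le hp0.ne']

/-- elementary indicator vectors -/
def indv {n d : ℕ} (x₀ : Fin (n+1) → Fin d) : Fin (n+1) → Fin d → ℝ :=
  fun j l => if l = x₀ j then 1 else 0

lemma tvec_zero {n d : ℕ} (x : Fin (n+1) → Fin d) :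
    tvec (fun _ _ => (0:ℝ)) x = 0 := by
  unfold tvec
  exact Finset.prod_eq_zero (Finset.mem_univ 0) (by norm_num)

lemma tvec_indv {n d : ℕ} (x₀ x : Fin (n+1) → Fin d) :
    tvec (indv x₀) x = if x = x₀ then 1 else 0 := by
  unfold tvec indv
  by_cases h : x = x₀
  · subst h
    simp
  · obtain ⟨j, hj⟩ : ∃ j, x j ≠ x₀ j := by
      by_contra hc
      push_neg at hc
      exact h (funext hc)
    rw [if_neg h]
    apply Finset.prod_eq_zero (Finset.mem_univ j)
    simp [hj]

lemma lpNormT_zero' {n d : ℕ} {p : ℝ} (hp : 0 < p) :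
    lpNormT (n:=n) (d:=d) p (tvec (fun _ _ => (0:ℝ))) = 0 := by
  unfold lpNormT
  rw [show ∑ x : Fin (n+1) → Fin d, ‖tvec (fun _ _ => (0:ℝ)) x‖ ^ p = 0 by
    apply Finset.sum_eq_zero; intro x _;
    rw [tvec_zero, norm_zero, Real.zero_rpow hp.ne']]
  rw [Real.zero_rpow (by positivity)]

lemma lpNormT_indv {n d : ℕ} {p : ℝ} (hp : 0 < p) (x₀ : Fin (n+1) → Fin d) :
    lpNormT p (tvec (indv x₀)) = 1 := by
  unfold lpNormT
  have : ∀ x : Fin (n+1) → Fin d,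
      ‖tvec (indv x₀) x‖ ^ p = if x = x₀ then 1 else 0 := by
    intro x
    rw [tvec_indv]
    by_cases h : x = x₀ <;> simp [h, Real.zero_rpow hp.ne']
  rw [Finset.sum_congr rfl (fun x _ => this x), Finset.sum_ite_eq' Finset.univ x₀ (fun _ => (1:ℝ)),
    if_pos (Finset.mem_univ _), Real.one_rpow]

/-- **Dimension-independent bound on the approximate nonnegative rank**: every nonzero
nonnegative tensor `M` with `K = ‖M‖_{ℓ₁}` is `ε`-approximated in `ℓ_p`-norm (`1 < p < ∞`)
by `K/k` times a sum of `k` elementary tensors of entrywise nonnegative vectors, each of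
`ℓ_p`-norm at most one, with `k ≤ ⌈C_p (2K/ε)^{p/(p-1)}⌉` if `p ≤ 2` and
`k ≤ ⌈D_p (2K/ε)²⌉` if `2 ≤ p`. -/
theorem approx_nonneg_rank_bound {n d : ℕ} (p ε : ℝ) (hp : 1 < p) (hε : 0 < ε)
    (M : (Fin (n+1) → Fin d) → ℂ) (hnn : ∀ x, 0 ≤ M x) (hM : M ≠ 0) :
    ∃ (k : ℕ) (v : Fin k → Fin (n+1) → Fin d → ℝ),
      1 ≤ k ∧
      (∀ i j l, 0 ≤ v i j l) ∧
      (∀ i, lpNormT p (tvec (v i)) ≤ 1) ∧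
      lpNormT p (fun x => M x - (lpNormT 1 M / k) * (∑ i, tvec (v i) x)) ≤ ε ∧
      (p ≤ 2 → k ≤ ⌈Cp p * (2 * lpNormT 1 M / ε) ^ (p / (p - 1))⌉₊) ∧
      (2 ≤ p → k ≤ ⌈Dp p * (2 * lpNormT 1 M / ε) ^ 2⌉₊) := by
  classical
  have hp0 : (0:ℝ) < p := lt_trans one_pos hp
  have hp1 : (0:ℝ) < p - 1 := by linarith
  set m : (Fin (n+1) → Fin d) → ℝ := fun x => (M x).re with hm_def
  have hm0 : ∀ x, 0 ≤ m x := fun x => (Complex.nonneg_iff.mp (hnn x)).1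
  have hMx : ∀ x, M x = ((m x : ℝ) : ℂ) := by
    intro x
    apply Complex.ext
    · simp [hm_def]
    · simp [hm_def, ← (Complex.nonneg_iff.mp (hnn x)).2]
  have habs : ∀ x, ‖M x‖ = m x := by
    intro x; rw [hMx x, Complex.norm_real, Real.norm_of_nonneg (hm0 x)]
  have hKsum : lpNormT 1 M = ∑ x, m x := by
    unfold lpNormT
    simp [habs, Real.rpow_one]
  set K := lpNormT 1 M with hK_def
  have hK0 : 0 < K := by
    obtain ⟨x, hx⟩ : ∃ x, M x ≠ 0 := by
      by_contra h; push_neg at h; exact hM (funext h)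
    have hmx : 0 < m x := by
      rcases eq_or_lt_of_le (hm0 x) with h | h
      · exact absurd (by rw [hMx x, ← h]; norm_num) hx
      · exact h
    rw [hKsum]
    exact Finset.sum_pos' (fun y _ => hm0 y) ⟨x, Finset.mem_univ x, hmx⟩
  -- positivity of constants
  have hCp : 0 < Cp p := by
    unfold Cp
    apply Real.rpow_pos_of_pos
    positivity
  rcases le_or_gt K ε with hKε | hεK
  · -- trivial case: the zero approximation works
    refine ⟨1, fun _ _ _ => 0, le_refl 1, fun i j l => le_refl 0, ?_, ?_, ?_, ?_⟩
    · intro i; rw [lpNormT_zero' hp0]; exact zero_le_one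
    · have heq : (fun x => M x - ((K : ℂ) / ((1:ℕ) : ℂ)) * (∑ _i : Fin 1,
          tvec (fun _ _ => (0:ℝ)) x)) = M := by
        funext x
        rw [show (∑ _i : Fin 1, tvec (fun _ _ => (0:ℝ)) x) = 0 by simp [tvec_zero]]
        ring
      rw [heq]
      calc lpNormT p M = (∑ x, (m x) ^ p) ^ (1/p) := by
            unfold lpNormT
            rw [Finset.sum_congr rfl (fun x _ => by rw [habs])]
        _ ≤ ∑ x, m x := lp_le_l1' hp m hm0
        _ = K := hKsum.symm
        _ ≤ ε := hKε
    · intro _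
      rw [Nat.one_le_ceil_iff]
      positivity
    · intro h2p
      have hDp : 0 < Dp p := by unfold Dp; positivity
      rw [Nat.one_le_ceil_iff]
      exact mul_pos hDp (by positivity)
  · -- main case
    set B := 2 * K / ε with hB_def
    have hB : 0 < B := by positivity
    have hB1 : 1 ≤ B := by
      rw [hB_def, le_div_iff₀ hε]; linarith
    set q := p / (p - 1) with hq_def
    have hq0 : 0 < q := by positivity
    have hBq : 0 < B ^ q := Real.rpow_pos_of_pos hB q
    set k := ⌈B ^ q⌉₊ with hk_def
    have hk1 : 1 ≤ k := Nat.one_le_ceil_iff.mpr hBq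
    have hkR : B ^ q ≤ (k : ℝ) := Nat.le_ceil _
    have hk0 : (0:ℝ) < (k : ℝ) := lt_of_lt_of_le hBq hkR
    set r : (Fin (n+1) → Fin d) → ℕ := fun x => ⌊m x * k / K⌋₊ with hr_def
    have hrle : ∀ x, (r x : ℝ) ≤ m x * k / K := by
      intro x
      exact Nat.floor_le (div_nonneg (mul_nonneg (hm0 x) hk0.le) hK0.le)
    have hrsum : ∑ x, r x ≤ k := by
      have hreal : (((∑ x, r x : ℕ)) : ℝ) ≤ (k : ℝ) := by
        push_cast
        calc ∑ x, (r x : ℝ) ≤ ∑ x, m x * k / K :=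
              Finset.sum_le_sum (fun x _ => hrle x)
          _ = (∑ x, m x) * k / K := by rw [← Finset.sum_div, ← Finset.sum_mul]
          _ = (k : ℝ) := by rw [← hKsum, mul_comm, mul_div_assoc, div_self hK0.ne', mul_one]
      exact_mod_cast hreal
    -- build the vectors via an embedding
    have hcardT : Fintype.card (Σ x : Fin (n+1) → Fin d, Fin (r x)) ≤ Fintype.card (Fin k) := by
      simpa [Fintype.card_sigma] using hrsum
    obtain ⟨e⟩ := Function.Embedding.nonempty_of_card_le hcardT
    set v : Fin k → Fin (n+1) → Fin d → ℝ := fun i =>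
      if h : ∃ t, e t = i then indv (Classical.choose h).1 else fun _ _ => 0 with hv_def
    have himg : ∀ t : (Σ x : Fin (n+1) → Fin d, Fin (r x)), v (e t) = indv t.1 := by
      intro t
      have hex : ∃ t', e t' = e t := ⟨t, rfl⟩
      have hch : Classical.choose hex = t := e.injective (Classical.choose_spec hex)
      simp only [hv_def, dif_pos hex, hch]
    have hsum : ∀ x, (∑ i, tvec (v i) x) = (r x : ℂ) := by
      intro x
      have hzero : ∀ i ∈ Finset.univ, i ∉ Finset.univ.map e → tvec (v i) x = 0 := by
        intro i _ hi
        have hne : ¬ ∃ t, e t = i := by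
          rintro ⟨t, ht⟩
          exact hi (Finset.mem_map.mpr ⟨t, Finset.mem_univ t, ht⟩)
        simp only [hv_def, dif_neg hne]
        exact tvec_zero x
      calc ∑ i, tvec (v i) x = ∑ i ∈ Finset.univ.map e, tvec (v i) x :=
            (Finset.sum_subset (Finset.subset_univ _) hzero).symm
        _ = ∑ t : (Σ x' : Fin (n+1) → Fin d, Fin (r x')), tvec (v (e t)) x :=
            Finset.sum_map _ e _
        _ = ∑ t : (Σ x' : Fin (n+1) → Fin d, Fin (r x')), (if x = t.1 then 1 else 0) := by
            apply Finset.sum_congr rfl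
            intro t _
            rw [himg t, tvec_indv]
        _ = ∑ x' : Fin (n+1) → Fin d, ∑ _j : Fin (r x'), (if x = x' then (1:ℂ) else 0) := by
            rw [← Finset.univ_sigma_univ, Finset.sum_sigma]
        _ = ∑ x' : Fin (n+1) → Fin d, (if x = x' then (r x' : ℂ) else 0) := by
            apply Finset.sum_congr rfl
            intro x' _
            rw [Finset.sum_const, Finset.card_univ, Fintype.card_fin, nsmul_eq_mul,
              mul_ite, mul_one, mul_zero]
        _ = (r x : ℂ) := by rw [Finset.sum_ite_eq Finset.univ x (fun x' => (r x' : ℂ)),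
              if_pos (Finset.mem_univ x)]
    refine ⟨k, v, hk1, ?_, ?_, ?_, ?_, ?_⟩
    · intro i j l
      simp only [hv_def]
      split
      · unfold indv; split <;> norm_num
      · exact le_refl 0
    · intro i
      simp only [hv_def]
      split
      · rw [lpNormT_indv hp0]
      · rw [lpNormT_zero' hp0]; exact zero_le_one
    · -- error bound
      set δ : (Fin (n+1) → Fin d) → ℝ := fun x => m x - K * r x / k with hδ_def
      have hδ0 : ∀ x, 0 ≤ δ x := by
        intro x
        have h1 : (r x : ℝ) * K ≤ m x * k := by
          have := hrle x
          calc (r x : ℝ) * K ≤ (m x * k / K) * K := by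
                apply mul_le_mul_of_nonneg_right this hK0.le
            _ = m x * k := by field_simp
        simp only [hδ_def]
        rw [sub_nonneg, div_le_iff₀ hk0]
        nlinarith
      have hδm : ∀ x, δ x ≤ m x := by
        intro x
        simp only [hδ_def]
        have : 0 ≤ K * r x / k := by positivity
        linarith
      have hδk : ∀ x, δ x ≤ K / k := by
        intro x
        have h1 : m x * k / K < (r x : ℝ) + 1 := Nat.lt_floor_add_one _
        have h2 : m x * k < ((r x : ℝ) + 1) * K := by
          rw [div_lt_iff₀ hK0] at h1; exact h1
        simp only [hδ_def]
        rw [sub_le_iff_le_add, ← add_div, le_div_iff₀ hk0]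
        nlinarith
      have hdiff : (fun x => M x - ((K:ℂ) / ((k:ℕ):ℂ)) * (∑ i, tvec (v i) x))
          = fun x => ((δ x : ℝ) : ℂ) := by
        funext x
        rw [hsum x, hMx x]
        simp only [hδ_def]
        push_cast
        ring
      rw [hdiff]
      have : lpNormT p (fun x => ((δ x : ℝ) : ℂ)) = (∑ x, δ x ^ p) ^ (1/p) := by
        unfold lpNormT
        congr 1
        apply Finset.sum_congr rfl
        intro x _
        rw [Complex.norm_real, Real.norm_of_nonneg (hδ0 x)]
      rw [this]
      refine lp_estimate' hp hε hεK ?_ δ m hδ0 hδm hδk (le_of_eq hKsum.symm)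
      rw [← hB_def, ← hq_def]
      exact hkR
    · -- bound for p ≤ 2
      intro hp2
      apply Nat.ceil_le_ceil
      apply le_mul_of_one_le_left (Real.rpow_nonneg hB.le q)
      unfold Cp
      rw [← hq_def]
      apply Real.one_le_rpow _ hq0.le
      rw [le_div_iff₀ (Real.rpow_pos_of_pos hp0 _)]
      have h1 : p ^ (1/p) ≤ p := by
        calc p ^ (1/p) ≤ p ^ (1:ℝ) := by
              apply Real.rpow_le_rpow_of_exponent_le hp.le
              rw [div_le_one hp0]; linarith
          _ = p := Real.rpow_one p
      have h2 : (1:ℝ) ≤ Real.exp 2 := Real.one_le_exp (by norm_num)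
      nlinarith
    · -- bound for 2 ≤ p
      intro h2p
      apply Nat.ceil_le_ceil
      have hq2 : q ≤ 2 := by
        rw [hq_def, div_le_iff₀ hp1]; linarith
      have hBq2 : B ^ q ≤ B ^ (2:ℕ) := by
        rw [← Real.rpow_natCast B 2]
        exact Real.rpow_le_rpow_of_exponent_le hB1 (by exact_mod_cast hq2)
      have hDp1 : 1 ≤ Dp p := by
        unfold Dp
        have h2 : (1:ℝ) ≤ Real.exp 4 := Real.one_le_exp (by norm_num)
        nlinarith
      calc (B ^ q : ℝ) ≤ B ^ (2:ℕ) := hBq2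
        _ ≤ Dp p * B ^ (2:ℕ) := le_mul_of_one_le_left (by positivity) hDp1
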